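/- arXiv:1210.6719 — 6 statements merged into one kernel-verified Lean document; each statement's English description precedes it below -/
import Mathlib

section
/- Let U be a finite set, A a finite set of functions A : U^n → Im(A), and p_A a probability distribution on A. Suppose the pair (A, p_A) satisfies the condition: for every u ∈ U^n, the sum over all u' ≠ u with p_A({A : A u = A u'}) > α/|Im(A)| of p_A({A : A u = A u'}) is at most β. Then for any two subsets T, T' ⊆ U^n, the double sum over u ∈ T and u' ∈ T' of p_A({A : A u = A u'}) is at most |T ∩ T'| + |T||T'|·α/|Im(A)| + min(|T|, |T'|)·β. -/
open Finset
open scoped Classical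

variable {U B : Type*}

/-- collision probability `p_A({A : A u = A u'})` for a distribution `p` on the
family of functions `(Fin n → U) → B`. -/
noncomputable def collP [Fintype U] [DecidableEq U] [Fintype B] {n : ℕ}
    (p : ((Fin n → U) → B) → ℝ) (u u' : Fin n → U) : ℝ :=
  ∑ A : (Fin n → U) → B, p A * (if A u = A u' then 1 else 0)

lemma collP_nonneg [Fintype U] [DecidableEq U] [Fintype B] {n : ℕ}
    (p : ((Fin n → U) → B) → ℝ) (hp : ∀ A, 0 ≤ p A) (u u' : Fin n → U) :
    0 ≤ collP p u u' :=
  Finset.sum_nonneg fun A _ => mul_nonneg (hp A) (by split <;> norm_num)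

lemma collP_symm [Fintype U] [DecidableEq U] [Fintype B] {n : ℕ}
    (p : ((Fin n → U) → B) → ℝ) (u u' : Fin n → U) :
    collP p u u' = collP p u' u := by
  unfold collP
  refine Finset.sum_congr rfl fun A _ => ?_
  congr 1
  by_cases h : A u = A u'
  · simp [h]
  · simp [h, Ne.symm h]

lemma collP_diag [Fintype U] [DecidableEq U] [Fintype B] {n : ℕ}
    (p : ((Fin n → U) → B) → ℝ) (hp1 : ∑ A, p A = 1) (u : Fin n → U) :
    collP p u u = 1 := by
  simp [collP, hp1]

lemma stmt0_key [Fintype U] [DecidableEq U] [Fintype B] {n : ℕ}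
    (p : ((Fin n → U) → B) → ℝ) (hp : ∀ A, 0 ≤ p A) (hp1 : ∑ A, p A = 1)
    (α β : ℝ) (hα : 0 ≤ α) (hβ : 0 ≤ β)
    (H3 : ∀ u : Fin n → U,
      ∑ u' ∈ Finset.univ.filter
          (fun u' => u' ≠ u ∧ α / (Fintype.card B : ℝ) < collP p u u'),
        collP p u u' ≤ β)
    (T T' : Finset (Fin n → U)) :
    ∑ u ∈ T, ∑ u' ∈ T', collP p u u' ≤
      ((T ∩ T').card : ℝ) + (T.card : ℝ) * (T'.card : ℝ) * α / (Fintype.card B : ℝ)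
        + (T.card : ℝ) * β := by
  have hαB : 0 ≤ α / (Fintype.card B : ℝ) := div_nonneg hα (Nat.cast_nonneg _)
  have step : ∀ u ∈ T, ∑ u' ∈ T', collP p u u' ≤
      (if u ∈ T' then (1:ℝ) else 0) + (T'.card : ℝ) * (α / (Fintype.card B : ℝ)) + β := by
    intro u _
    have hsplit : ∑ u' ∈ T', collP p u u' =
        (∑ u' ∈ T'.filter (fun u' => u' = u), collP p u u') +
        ∑ u' ∈ T'.filter (fun u' => ¬ u' = u), collP p u u' :=
      (Finset.sum_filter_add_sum_filter_not _ _ _).symm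
    have h1 : ∑ u' ∈ T'.filter (fun u' => u' = u), collP p u u' =
        if u ∈ T' then (1:ℝ) else 0 := by
      rw [Finset.sum_filter, Finset.sum_ite_eq' T' u (fun u' => collP p u u'),
        collP_diag p hp1 u]
    have hsplit2 : ∑ u' ∈ T'.filter (fun u' => ¬ u' = u), collP p u u' =
        (∑ u' ∈ (T'.filter (fun u' => ¬ u' = u)).filter
            (fun u' => α / (Fintype.card B : ℝ) < collP p u u'), collP p u u') +
        ∑ u' ∈ (T'.filter (fun u' => ¬ u' = u)).filter
            (fun u' => ¬ α / (Fintype.card B : ℝ) < collP p u u'), collP p u u' :=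
      (Finset.sum_filter_add_sum_filter_not _ _ _).symm
    have hbig : ∑ u' ∈ (T'.filter (fun u' => ¬ u' = u)).filter
        (fun u' => α / (Fintype.card B : ℝ) < collP p u u'), collP p u u' ≤ β := by
      refine le_trans (Finset.sum_le_sum_of_subset_of_nonneg ?_
        (fun i _ _ => collP_nonneg p hp u i)) (H3 u)
      intro x hx
      simp only [Finset.mem_filter, Finset.mem_univ, true_and] at hx ⊢
      exact ⟨hx.1.2, hx.2⟩
    have hsmall : ∑ u' ∈ (T'.filter (fun u' => ¬ u' = u)).filter
        (fun u' => ¬ α / (Fintype.card B : ℝ) < collP p u u'), collP p u u' ≤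
        (T'.card : ℝ) * (α / (Fintype.card B : ℝ)) := by
      have hle : ∑ u' ∈ (T'.filter (fun u' => ¬ u' = u)).filter
          (fun u' => ¬ α / (Fintype.card B : ℝ) < collP p u u'), collP p u u' ≤
          (((T'.filter (fun u' => ¬ u' = u)).filter
            (fun u' => ¬ α / (Fintype.card B : ℝ) < collP p u u')).card : ℝ) *
            (α / (Fintype.card B : ℝ)) := by
        rw [← nsmul_eq_mul]
        refine Finset.sum_le_card_nsmul _ _ _ ?_
        intro x hx
        simp only [Finset.mem_filter, not_lt] at hx
        exact hx.2
      refine hle.trans (mul_le_mul_of_nonneg_right ?_ hαB)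
      exact_mod_cast Finset.card_le_card
        ((Finset.filter_subset _ _).trans (Finset.filter_subset _ _))
    rw [hsplit, h1, hsplit2]
    linarith
  calc ∑ u ∈ T, ∑ u' ∈ T', collP p u u'
      ≤ ∑ u ∈ T, ((if u ∈ T' then (1:ℝ) else 0)
          + (T'.card : ℝ) * (α / (Fintype.card B : ℝ)) + β) :=
        Finset.sum_le_sum step
    _ = ((T ∩ T').card : ℝ) + (T.card : ℝ) * (T'.card : ℝ) * α / (Fintype.card B : ℝ)
        + (T.card : ℝ) * β := by
        rw [Finset.sum_add_distrib, Finset.sum_add_distrib, Finset.sum_const,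
          Finset.sum_const, Finset.sum_boole, Finset.filter_mem_eq_inter]
        push_cast
        ring

/-- the strong hash condition (H3) implies the weak hash condition (H3'). -/
theorem stmt0 [Fintype U] [DecidableEq U] [Fintype B] {n : ℕ}
    (p : ((Fin n → U) → B) → ℝ) (hp : ∀ A, 0 ≤ p A) (hp1 : ∑ A, p A = 1)
    (α β : ℝ) (hα : 0 ≤ α) (hβ : 0 ≤ β)
    (H3 : ∀ u : Fin n → U,
      ∑ u' ∈ Finset.univ.filter
          (fun u' => u' ≠ u ∧ α / (Fintype.card B : ℝ) < collP p u u'),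
        collP p u u' ≤ β)
    (T T' : Finset (Fin n → U)) :
    ∑ u ∈ T, ∑ u' ∈ T', collP p u u' ≤
      ((T ∩ T').card : ℝ) + (T.card : ℝ) * (T'.card : ℝ) * α / (Fintype.card B : ℝ)
        + (min T.card T'.card : ℝ) * β := by
  rcases le_total T.card T'.card with h | h
  · have := stmt0_key p hp hp1 α β hα hβ H3 T T'
    rw [min_eq_left (show ((T.card:ℝ)) ≤ (T'.card:ℝ) by exact_mod_cast h)]
    exact this
  · have key := stmt0_key p hp hp1 α β hα hβ H3 T' T
    rw [min_eq_right (show ((T'.card:ℝ)) ≤ (T.card:ℝ) by exact_mod_cast h)]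
    have hswap : ∑ u ∈ T, ∑ u' ∈ T', collP p u u' =
        ∑ u ∈ T', ∑ u' ∈ T, collP p u u' := by
      rw [Finset.sum_comm]
      exact Finset.sum_congr rfl fun u _ => Finset.sum_congr rfl fun u' _ =>
        collP_symm p u' u
    rw [hswap, Finset.inter_comm]
    calc ∑ u ∈ T', ∑ u' ∈ T, collP p u u'
        ≤ ((T' ∩ T).card : ℝ) + (T'.card : ℝ) * (T.card : ℝ) * α / (Fintype.card B : ℝ)
          + (T'.card : ℝ) * β := key
      _ = ((T' ∩ T).card : ℝ) + (T.card : ℝ) * (T'.card : ℝ) * α / (Fintype.card B : ℝ)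
          + (T'.card : ℝ) * β := by ring
end

section
/- Let (A, p_A) be a pair consisting of a finite set A of functions A : U^n → Im(A) and a probability distribution p_A on A satisfying the weak hash inequality: for all T, T' ⊆ U^n, ∑_{u∈T, u'∈T'} p_A({A : A u = A u'}) ≤ |T ∩ T'| + |T||T'|·α/|Im(A)| + min(|T|,|T'|)·β. Let the random variable a be uniformly distributed on Im(A) and independent of the random function A. Then for any nonempty T ⊆ U^n, the probability that T ∩ {u : A u = a} = ∅ is at most α − 1 + |Im(A)|·(β + 1)/|T|. -/
open Finset
open scoped Classical

variable {U B : Type*}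

private lemma stmt1_arith {S0 D x : ℝ} (hx0 : 0 < x) (hD0 : 0 < D) (hS0nn : 0 ≤ S0)
    (h2 : x ^ 2 ≤ x * D * (1 - S0)) : S0 * x ≤ D - x := by
  have hkey : S0 * D ≤ D - x := by nlinarith
  have hDx : x ≤ D := by nlinarith
  nlinarith

/-- saturation property.  Under the weak hash inequality, with `a` uniform on
`Im 𝓐 = B` and independent of `A`, the probability that `T ∩ C_A(a) = ∅` is at most
`α − 1 + |Im 𝓐|(β + 1)/|T|`. -/
theorem stmt1 [Fintype U] [DecidableEq U] [Fintype B] {n : ℕ}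
    (p : ((Fin n → U) → B) → ℝ) (hp : ∀ A, 0 ≤ p A) (hp1 : ∑ A, p A = 1)
    (α β : ℝ) (hα : 0 ≤ α) (hβ : 0 ≤ β)
    (WH : ∀ T T' : Finset (Fin n → U),
      ∑ u ∈ T, ∑ u' ∈ T', collP p u u' ≤
        ((T ∩ T').card : ℝ) + (T.card : ℝ) * (T'.card : ℝ) * α / (Fintype.card B : ℝ)
          + (min T.card T'.card : ℝ) * β)
    (T : Finset (Fin n → U)) (hT : T.Nonempty) :
    ∑ A : (Fin n → U) → B, ∑ a : B,
        p A * ((Fintype.card B : ℝ))⁻¹ * (if ∀ u ∈ T, A u ≠ a then 1 else 0) ≤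
      α - 1 + (Fintype.card B : ℝ) * (β + 1) / (T.card : ℝ) := by
  classical
  obtain ⟨u0, hu0⟩ := hT
  have hfun : Nonempty ((Fin n → U) → B) := by
    by_contra h
    rw [not_nonempty_iff] at h
    rw [Finset.univ_eq_empty, Finset.sum_empty] at hp1
    norm_num at hp1
  have hB : Nonempty B := ⟨hfun.some u0⟩
  set m : ℝ := (Fintype.card B : ℝ) with hm_def
  set x : ℝ := (T.card : ℝ) with hx_def
  have hm0 : 0 < m := by
    rw [hm_def]
    exact_mod_cast Fintype.card_pos (α := B)
  have hx0 : 0 < x := by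
    rw [hx_def]
    exact_mod_cast Finset.card_pos.mpr ⟨u0, hu0⟩
  -- notation
  set N : ((Fin n → U) → B) → B → ℝ :=
    fun A a => ((T.filter fun u => A u = a).card : ℝ) with hN_def
  set w : ((Fin n → U) → B) → ℝ := fun A => p A * m⁻¹ with hw_def
  have hwnn : ∀ A, 0 ≤ w A := fun A => mul_nonneg (hp A) (inv_nonneg.mpr hm0.le)
  set ind : ((Fin n → U) → B) → B → ℝ :=
    fun A a => if N A a = 0 then 0 else 1 with hind_def
  -- the LHS equals ∑ w * (1 - ind)
  set S0 : ℝ := ∑ A : (Fin n → U) → B, ∑ a : B,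
      p A * m⁻¹ * (if ∀ u ∈ T, A u ≠ a then 1 else 0) with hS0_def
  have hiff : ∀ A a, (∀ u ∈ T, A u ≠ a) ↔ N A a = 0 := by
    intro A a
    rw [hN_def]
    simp only [Nat.cast_eq_zero, Finset.card_eq_zero, Finset.filter_eq_empty_iff]
  -- total mass is 1
  have hmne : m ≠ 0 := hm0.ne'
  have htot : ∑ A : (Fin n → U) → B, ∑ a : B, w A = 1 := by
    have step : ∀ A : (Fin n → U) → B, ∑ _a : B, w A = p A := by
      intro A
      rw [Finset.sum_const, Finset.card_univ, nsmul_eq_mul, ← hm_def, hw_def]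
      field_simp
    rw [Finset.sum_congr rfl fun A _ => step A, hp1]
  -- first moment
  have hNsum1 : ∀ A, ∑ a : B, N A a = x := by
    intro A
    rw [hN_def, hx_def]
    rw [← Nat.cast_sum]
    congr 1
    exact (Finset.card_eq_sum_card_fiberwise (f := A) (fun u _ => Finset.mem_univ (A u))).symm
  have hS1 : ∑ A : (Fin n → U) → B, ∑ a : B, w A * N A a = x / m := by
    have : ∀ A : (Fin n → U) → B, ∑ a : B, w A * N A a = w A * x := by
      intro A; rw [← Finset.mul_sum, hNsum1]
    rw [Finset.sum_congr rfl fun A _ => this A]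
    have e : ∑ A : (Fin n → U) → B, w A * x = (∑ A : (Fin n → U) → B, p A) * (m⁻¹ * x) := by
      rw [Finset.sum_mul]
      exact Finset.sum_congr rfl fun A _ => by rw [hw_def]; ring
    rw [e, hp1]
    field_simp
  -- second moment
  have hsq : ∀ A, ∑ a : B, (N A a) ^ 2 =
      ∑ u ∈ T, ∑ u' ∈ T, (if A u = A u' then (1:ℝ) else 0) := by
    intro A
    have h1 : ∀ a, N A a = ∑ u ∈ T, (if A u = a then (1:ℝ) else 0) := by
      intro a
      rw [hN_def]
      rw [Finset.sum_boole]
    have h2 : ∀ a, (N A a) ^ 2 = ∑ u ∈ T, ∑ u' ∈ T,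
        (if A u = a then (1:ℝ) else 0) * (if A u' = a then (1:ℝ) else 0) := by
      intro a
      rw [sq, h1, Finset.sum_mul_sum]
    rw [Finset.sum_congr rfl fun a _ => h2 a]
    rw [Finset.sum_comm]
    refine Finset.sum_congr rfl fun u _ => ?_
    rw [Finset.sum_comm]
    refine Finset.sum_congr rfl fun u' _ => ?_
    by_cases h : A u = A u'
    · rw [if_pos h, h]
      have e : ∀ a : B, (if A u' = a then (1:ℝ) else 0) * (if A u' = a then 1 else 0) =
          if A u' = a then (1:ℝ) else 0 := fun a => by by_cases ha : A u' = a <;> simp [ha]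
      rw [Finset.sum_congr rfl fun a _ => e a, Finset.sum_ite_eq]
      simp
    · rw [if_neg h]
      refine Finset.sum_eq_zero fun a _ => ?_
      by_cases h1 : A u = a
      · have h2 : A u' ≠ a := fun hc => h (h1.trans hc.symm)
        simp [h1, h2]
      · simp [h1]
  have hS2 : ∑ A : (Fin n → U) → B, ∑ a : B, w A * (N A a) ^ 2 =
      m⁻¹ * ∑ u ∈ T, ∑ u' ∈ T, collP p u u' := by
    have step : ∀ A : (Fin n → U) → B, ∑ a : B, w A * (N A a) ^ 2 =
        m⁻¹ * ∑ u ∈ T, ∑ u' ∈ T, p A * (if A u = A u' then (1:ℝ) else 0) := by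
      intro A
      rw [← Finset.mul_sum, hsq]
      simp only [hw_def, Finset.mul_sum]
      refine Finset.sum_congr rfl fun u _ => Finset.sum_congr rfl fun u' _ => ?_
      ring
    rw [Finset.sum_congr rfl fun A _ => step A, ← Finset.mul_sum]
    congr 1
    rw [Finset.sum_comm]
    refine Finset.sum_congr rfl fun u _ => ?_
    rw [Finset.sum_comm]
    refine Finset.sum_congr rfl fun u' _ => ?_
    rfl
  -- S0 in terms of ind
  have hS0' : S0 = 1 - ∑ A : (Fin n → U) → B, ∑ a : B, w A * ind A a := by
    rw [← htot]
    rw [hS0_def, ← Finset.sum_sub_distrib]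
    refine Finset.sum_congr rfl fun A _ => ?_
    rw [← Finset.sum_sub_distrib]
    refine Finset.sum_congr rfl fun a _ => ?_
    simp only [hind_def]
    by_cases h : N A a = 0
    · rw [if_pos h, if_pos ((hiff A a).mpr h)]
      simp [hw_def]
    · rw [if_neg h, if_neg (fun hc : ∀ u ∈ T, A u ≠ a => h ((hiff A a).mp hc))]
      simp [hw_def]
  -- Cauchy–Schwarz over the product type
  have hCS : (x / m) ^ 2 ≤ (∑ A : (Fin n → U) → B, ∑ a : B, w A * (N A a) ^ 2) * (1 - S0) := by
    have key := Finset.sum_sq_le_sum_mul_sum_of_sq_eq_mul (Finset.univ : Finset (((Fin n → U) → B) × B))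
      (r := fun z => w z.1 * N z.1 z.2 * ind z.1 z.2)
      (f := fun z => w z.1 * (N z.1 z.2) ^ 2)
      (g := fun z => w z.1 * ind z.1 z.2)
      (fun z _ => mul_nonneg (hwnn z.1) (sq_nonneg _))
      (fun z _ => mul_nonneg (hwnn z.1) (by simp only [hind_def]; split <;> norm_num))
      (fun z _ => by
        simp only [hind_def]
        by_cases h : N z.1 z.2 = 0 <;> simp [h] <;> ring)
    have hr : ∑ z : ((Fin n → U) → B) × B, w z.1 * N z.1 z.2 * ind z.1 z.2 = x / m := by
      rw [← hS1, Fintype.sum_prod_type]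
      refine Finset.sum_congr rfl fun A _ => Finset.sum_congr rfl fun a _ => ?_
      simp only [hind_def]
      by_cases h : N A a = 0 <;> simp [h]
    rw [hr, Fintype.sum_prod_type, Fintype.sum_prod_type] at key
    rw [hS0']
    simpa using key
  -- apply WH
  have hWH : ∑ u ∈ T, ∑ u' ∈ T, collP p u u' ≤ x + x * x * α / m + x * β := by
    have := WH T T
    simpa [Finset.inter_self, min_self, ← hm_def, ← hx_def] using this
  have hS0nn : 0 ≤ S0 := by
    rw [hS0_def]
    refine Finset.sum_nonneg fun A _ => Finset.sum_nonneg fun a _ => ?_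
    have := hwnn A
    rw [hw_def] at this
    split <;> nlinarith
  have hS0le1 : S0 ≤ 1 := by
    rw [hS0']
    have : 0 ≤ ∑ A : (Fin n → U) → B, ∑ a : B, w A * ind A a := by
      refine Finset.sum_nonneg fun A _ => Finset.sum_nonneg fun a _ => ?_
      exact mul_nonneg (hwnn A) (by simp only [hind_def]; split <;> norm_num)
    linarith
  -- combine
  set D : ℝ := m * (1 + β) + x * α with hD_def
  have hD0 : 0 < D := by
    rw [hD_def]
    have : (0:ℝ) < m * (1 + β) := mul_pos hm0 (by linarith)
    have : (0:ℝ) ≤ x * α := mul_nonneg hx0.le hα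
    linarith
  have hCS2 : (x / m) ^ 2 ≤ (m⁻¹ * (x + x * x * α / m + x * β)) * (1 - S0) := by
    calc (x / m) ^ 2 ≤ (∑ A : (Fin n → U) → B, ∑ a : B, w A * (N A a) ^ 2) * (1 - S0) := hCS
      _ ≤ (m⁻¹ * (x + x * x * α / m + x * β)) * (1 - S0) := by
          apply mul_le_mul_of_nonneg_right _ (by linarith)
          rw [hS2]
          exact mul_le_mul_of_nonneg_left hWH (inv_nonneg.mpr hm0.le)
  have heq : m⁻¹ * (x + x * x * α / m + x * β) = x * D / m ^ 2 := by
    rw [hD_def]; field_simp; ring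
  rw [heq] at hCS2
  have h2 : x ^ 2 ≤ x * D * (1 - S0) := by
    have hm2 : (0:ℝ) < m ^ 2 := by positivity
    calc x ^ 2 = m ^ 2 * (x / m) ^ 2 := by field_simp
      _ ≤ m ^ 2 * (x * D / m ^ 2 * (1 - S0)) := by
          exact mul_le_mul_of_nonneg_left hCS2 hm2.le
      _ = x * D * (1 - S0) := by field_simp
  have hfin : S0 * x ≤ D - x := stmt1_arith hx0 hD0 hS0nn h2
  have hrhs : α - 1 + m * (β + 1) / x = (D - x) / x := by
    rw [hD_def, eq_div_iff hx0.ne', add_mul, div_mul_cancel₀ _ hx0.ne']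
    ring
  rw [hrhs, le_div_iff₀ hx0]
  exact hfin
end

section
/- Let (A, p_A) be a pair consisting of a finite set A of functions A : U^n → Im(A) and a probability distribution p_A on A satisfying the weak hash inequality with parameters α, β (as in (H3')). Then for every subset G ⊆ U^n and every u ∈ U^n, the probability under p_A that there exists u' ∈ G with u' ≠ u and A u' = A u is at most |G|·α/|Im(A)| + β. -/
open Finset
open scoped Classical

variable {U B : Type*}

/-- collision-resistance property.  Under the weak hash inequality,
the probability that some `u' ∈ G`, `u' ≠ u`, collides with `u` is at most
`|G| α /|Im 𝓐| + β`. -/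
theorem stmt2 [Fintype U] [DecidableEq U] [Fintype B] {n : ℕ}
    (p : ((Fin n → U) → B) → ℝ) (hp : ∀ A, 0 ≤ p A) (hp1 : ∑ A, p A = 1)
    (α β : ℝ) (hα : 0 ≤ α) (hβ : 0 ≤ β)
    (WH : ∀ T T' : Finset (Fin n → U),
      ∑ u ∈ T, ∑ u' ∈ T', collP p u u' ≤
        ((T ∩ T').card : ℝ) + (T.card : ℝ) * (T'.card : ℝ) * α / (Fintype.card B : ℝ)
          + (min T.card T'.card : ℝ) * β)
    (G : Finset (Fin n → U)) (u : Fin n → U) :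
    ∑ A : (Fin n → U) → B,
        p A * (if ∃ u' ∈ G, u' ≠ u ∧ A u' = A u then 1 else 0) ≤
      (G.card : ℝ) * α / (Fintype.card B : ℝ) + β := by
  have key := WH (G.erase u) {u}
  -- step 1: pointwise bound
  have h1 : ∑ A : (Fin n → U) → B,
      p A * (if ∃ u' ∈ G, u' ≠ u ∧ A u' = A u then 1 else 0) ≤
      ∑ u' ∈ G.erase u, collP p u' u := by
    have swap : ∑ u' ∈ G.erase u, collP p u' u =
        ∑ A : (Fin n → U) → B, ∑ u' ∈ G.erase u,
          p A * (if A u' = A u then 1 else 0) := by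
      rw [Finset.sum_comm]
      rfl
    rw [swap]
    apply Finset.sum_le_sum
    intro A _
    by_cases h : ∃ u' ∈ G, u' ≠ u ∧ A u' = A u
    · obtain ⟨v, hvG, hvu, hv⟩ := h
      rw [if_pos ⟨v, hvG, hvu, hv⟩, mul_one]
      have hv' : v ∈ G.erase u := Finset.mem_erase.2 ⟨hvu, hvG⟩
      have := Finset.single_le_sum
        (f := fun u' => p A * (if A u' = A u then 1 else 0))
        (fun i _ => mul_nonneg (hp A) (by split <;> norm_num)) hv'
      simpa [hv] using this
    · rw [if_neg h, mul_zero]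
      apply Finset.sum_nonneg
      intro i _
      exact mul_nonneg (hp A) (by split <;> norm_num)
  -- step 2: rewrite key
  have h2 : ∑ u' ∈ G.erase u, collP p u' u =
      ∑ u' ∈ G.erase u, ∑ u'' ∈ ({u} : Finset (Fin n → U)), collP p u' u'' := by
    simp
  have hcap : ((G.erase u) ∩ ({u} : Finset (Fin n → U))).card = 0 := by
    rw [Finset.card_eq_zero, Finset.eq_empty_iff_forall_notMem]
    intro x hx
    rw [Finset.mem_inter, Finset.mem_erase, Finset.mem_singleton] at hx
    exact hx.1.1 hx.2
  have h3 : ∑ u' ∈ G.erase u, collP p u' u ≤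
      ((G.erase u).card : ℝ) * α / (Fintype.card B : ℝ) +
        (min (G.erase u).card 1 : ℕ) * β := by
    rw [h2]
    calc ∑ u' ∈ G.erase u, ∑ u'' ∈ ({u} : Finset (Fin n → U)), collP p u' u''
        ≤ _ := key
      _ = ((G.erase u).card : ℝ) * α / (Fintype.card B : ℝ) +
          (min (G.erase u).card 1 : ℕ) * β := by
        rw [hcap]
        simp
  refine h1.trans (h3.trans ?_)
  have hc1 : ((G.erase u).card : ℝ) * α ≤ (G.card : ℝ) * α := by
    apply mul_le_mul_of_nonneg_right _ hα
    exact_mod_cast Finset.card_erase_le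
  have hc2 : ((min (G.erase u).card 1 : ℕ) : ℝ) * β ≤ 1 * β := by
    apply mul_le_mul_of_nonneg_right _ hβ
    exact_mod_cast Nat.min_le_right _ 1
  have hd : ((G.erase u).card : ℝ) * α / (Fintype.card B : ℝ) ≤
      (G.card : ℝ) * α / (Fintype.card B : ℝ) := by
    rw [div_eq_mul_inv, div_eq_mul_inv]
    exact mul_le_mul_of_nonneg_right hc1 (by positivity)
  linarith
end

section
/- Let (A, p_A) satisfy the weak hash inequality with parameters α, β, let G ⊆ U^n, and let μ be a probability distribution supported on G. If the random function A has distribution p_A, then the expected μ-measure of the set of u ∈ G for which there exists u' ∈ G, u' ≠ u, with A u' = A u, is at most |G|·α/|Im(A)| + β. -/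
open Finset
open scoped Classical

variable {U B : Type*}

/-- averaged collision-resistance property.  For a probability
distribution `μ` supported on `G`, the expected `μ`-measure of the set of
colliding elements of `G` is at most `|G| α /|Im 𝓐| + β`. -/
theorem stmt3 [Fintype U] [DecidableEq U] [Fintype B] {n : ℕ}
    (p : ((Fin n → U) → B) → ℝ) (hp : ∀ A, 0 ≤ p A) (hp1 : ∑ A, p A = 1)
    (α β : ℝ) (hα : 0 ≤ α) (hβ : 0 ≤ β)
    (WH : ∀ T T' : Finset (Fin n → U),
      ∑ u ∈ T, ∑ u' ∈ T', collP p u u' ≤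
        ((T ∩ T').card : ℝ) + (T.card : ℝ) * (T'.card : ℝ) * α / (Fintype.card B : ℝ)
          + (min T.card T'.card : ℝ) * β)
    (G : Finset (Fin n → U))
    (μ : (Fin n → U) → ℝ) (hμ0 : ∀ u, 0 ≤ μ u) (hμ1 : ∑ u ∈ G, μ u = 1)
    (hμsupp : ∀ u ∉ G, μ u = 0) :
    ∑ A : (Fin n → U) → B,
        p A * (∑ u ∈ G.filter (fun u => ∃ u' ∈ G, u' ≠ u ∧ A u' = A u), μ u) ≤
      (G.card : ℝ) * α / (Fintype.card B : ℝ) + β := by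
  classical
  set C : ℝ := (G.card : ℝ) * α / (Fintype.card B : ℝ) + β with hC
  have key : ∀ u ∈ G,
      ∑ A : (Fin n → U) → B, p A * (if ∃ u' ∈ G, u' ≠ u ∧ A u' = A u then 1 else 0) ≤ C := by
    intro u hu
    have h1 : ∑ A : (Fin n → U) → B, p A * (if ∃ u' ∈ G, u' ≠ u ∧ A u' = A u then 1 else 0)
        ≤ ∑ u' ∈ G.erase u, ∑ u'' ∈ ({u} : Finset (Fin n → U)), collP p u' u'' := by
      simp only [Finset.sum_singleton, collP]
      rw [Finset.sum_comm]
      refine Finset.sum_le_sum fun A _ => ?_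
      have : (if ∃ u' ∈ G, u' ≠ u ∧ A u' = A u then (1:ℝ) else 0)
          ≤ ∑ u' ∈ G.erase u, (if A u' = A u then (1:ℝ) else 0) := by
        split_ifs with h
        · obtain ⟨u', hu', hne, heq⟩ := h
          have hmem : u' ∈ G.erase u := Finset.mem_erase.mpr ⟨hne, hu'⟩
          calc (1:ℝ) = (if A u' = A u then (1:ℝ) else 0) := by simp [heq]
            _ ≤ _ := Finset.single_le_sum (f := fun v => (if A v = A u then (1:ℝ) else 0))
                (fun v _ => by positivity) hmem
        · exact Finset.sum_nonneg fun v _ => by positivity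
      calc p A * (if ∃ u' ∈ G, u' ≠ u ∧ A u' = A u then (1:ℝ) else 0)
          ≤ p A * ∑ u' ∈ G.erase u, (if A u' = A u then (1:ℝ) else 0) :=
            mul_le_mul_of_nonneg_left this (hp A)
        _ = ∑ u' ∈ G.erase u, p A * (if A u' = A u then (1:ℝ) else 0) := by
            rw [Finset.mul_sum]
    have h2 := WH (G.erase u) ({u} : Finset (Fin n → U))
    have hinter : ((G.erase u) ∩ ({u} : Finset (Fin n → U))).card = 0 := by
      rw [Finset.card_eq_zero]
      ext v
      simp [Finset.mem_inter, Finset.mem_erase]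
    have hcardB : (0:ℝ) ≤ (Fintype.card B : ℝ) := by positivity
    have hstep1 : ((G.erase u).card : ℝ) * (({u} : Finset (Fin n → U)).card : ℝ) * α / (Fintype.card B : ℝ)
        ≤ (G.card : ℝ) * α / (Fintype.card B : ℝ) := by
      rcases hcardB.eq_or_lt with h | h
      · rw [← h]; simp
      · apply div_le_div_of_nonneg_right _ h.le |>.trans_eq rfl
        · simp only [Finset.card_singleton, Nat.cast_one, mul_one]
          exact mul_le_mul_of_nonneg_right
            (by exact_mod_cast Finset.card_le_card (Finset.erase_subset u G)) hα
    have hstep2 : ((min (G.erase u).card ({u} : Finset (Fin n → U)).card : ℕ) : ℝ) * β ≤ β := by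
      have : (min (G.erase u).card ({u} : Finset (Fin n → U)).card : ℕ) ≤ 1 := by
        simp [min_le_iff]
      calc ((min (G.erase u).card ({u} : Finset (Fin n → U)).card : ℕ) : ℝ) * β
          ≤ 1 * β := mul_le_mul_of_nonneg_right (by exact_mod_cast this) hβ
        _ = β := one_mul β
    calc _ ≤ _ := h1
      _ ≤ _ := h2
      _ ≤ C := by rw [hinter, hC]; rw [Nat.cast_min] at hstep2; push_cast; linarith
  have swap : ∑ A : (Fin n → U) → B,
      p A * (∑ u ∈ G.filter (fun u => ∃ u' ∈ G, u' ≠ u ∧ A u' = A u), μ u)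
      = ∑ u ∈ G, μ u * ∑ A : (Fin n → U) → B,
          p A * (if ∃ u' ∈ G, u' ≠ u ∧ A u' = A u then 1 else 0) := by
    simp only [Finset.sum_filter, Finset.mul_sum]
    rw [Finset.sum_comm]
    congr 1; ext u
    congr 1; ext A
    split_ifs <;> ring
  rw [swap]
  calc ∑ u ∈ G, μ u * ∑ A : (Fin n → U) → B,
        p A * (if ∃ u' ∈ G, u' ≠ u ∧ A u' = A u then 1 else 0)
      ≤ ∑ u ∈ G, μ u * C := Finset.sum_le_sum fun u hu =>
        mul_le_mul_of_nonneg_left (key u hu) (hμ0 u)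
    _ = C := by rw [← Finset.sum_mul, hμ1, one_mul]
end

section
/- For each j in a finite index set K, let (A_j, p_{A_j}) be a family of functions A_j : U_j^n → Im(A_j) with distribution p_{A_j} satisfying the strong hash condition with parameters (α_{A_j}, β_{A_j}), and suppose the random functions {A_j}_{j∈K} are mutually independent. For J ⊆ K define α_{A_J} := ∏_{j∈J} α_{A_j} and β_{A_J} := ∏_{j∈J}(1 + β_{A_j}) − 1. Then for every G ⊆ ∏_{j∈K} U_j^n and every u_K = (u_j)_{j∈K}, the probability that there exists u'_K ∈ G with u'_K ≠ u_K and A_j u'_j = A_j u_j for all j ∈ K is at most ∑_{∅≠J⊆K} [ |G_{J|J^c}| · α_{A_J} · (β_{A_{J^c}} + 1) / ∏_{j∈J} |Im(A_j)| ] + β_{A_K}, where |G_{J|J^c}| denotes |G| when J = K and otherwise the maximum over u_{J^c} in the projection of G of the number of u_J with (u_J, u_{J^c}) ∈ G. -/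
open Finset
open scoped Classical

/-- multi-terminal collision-resistance lemma.  For independent families
`(𝓐_j, p_{A_j})` each satisfying the strong hash condition with parameters `(α_j, β_j)`,
the probability that some `u' ∈ G` different from `u_K` collides with `u_K` in every
coordinate is bounded by
`∑_{∅≠J⊆K} |G_{J|J^c}| α_{A_J} (β_{A_{J^c}}+1) / ∏_{j∈J}|Im 𝓐_j| + β_{A_K}`. -/
theorem stmt16 {K : Type*} [Fintype K] [DecidableEq K]
    {U : K → Type*} [∀ j, Fintype (U j)] [∀ j, DecidableEq (U j)]
    {B : K → Type*} [∀ j, Fintype (B j)] {n : ℕ}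
    (p : ∀ j, ((Fin n → U j) → B j) → ℝ)
    (hp : ∀ j A, 0 ≤ p j A) (hp1 : ∀ j, ∑ A, p j A = 1)
    (α β : K → ℝ) (hα : ∀ j, 0 ≤ α j) (hβ : ∀ j, 0 ≤ β j)
    (Hhash : ∀ (j : K) (u : Fin n → U j),
      ∑ u' ∈ Finset.univ.filter (fun u' => u' ≠ u ∧
          α j / (Fintype.card (B j) : ℝ) <
            ∑ A : (Fin n → U j) → B j, p j A * (if A u = A u' then 1 else 0)),
        (∑ A : (Fin n → U j) → B j, p j A * (if A u = A u' then 1 else 0)) ≤ β j)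
    (G : Finset (∀ j, Fin n → U j)) (uK : ∀ j, Fin n → U j) :
    ∑ A : ∀ j, (Fin n → U j) → B j,
        (∏ j, p j (A j)) *
          (if ∃ u' ∈ G, u' ≠ uK ∧ ∀ j, A j (u' j) = A j (uK j) then 1 else 0)
      ≤ (∑ J ∈ Finset.univ.powerset.filter (fun J : Finset K => J.Nonempty),
          ((if J = Finset.univ then (G.card : ℝ)
              else ((G.sup fun w => (G.filter fun g => ∀ j ∉ J, g j = w j).card : ℕ) : ℝ)) *
            (∏ j ∈ J, α j) * (∏ j ∈ Jᶜ, (1 + β j))) /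
            (∏ j ∈ J, (Fintype.card (B j) : ℝ)))
        + ((∏ j : K, (1 + β j)) - 1) := by
  classical
  -- per-coordinate collision probability
  set q : ∀ j, (Fin n → U j) → ℝ :=
    fun j v => ∑ A : (Fin n → U j) → B j, p j A * (if A (uK j) = A v then 1 else 0) with hqdef
  set c : K → ℝ := fun j => (Fintype.card (B j) : ℝ) with hcdef
  have hq0 : ∀ j v, 0 ≤ q j v := fun j v =>
    Finset.sum_nonneg fun A _ => mul_nonneg (hp j A) (by split <;> norm_num)
  have hqK : ∀ j, q j (uK j) = 1 := by
    intro j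
    have : q j (uK j) = ∑ A : (Fin n → U j) → B j, p j A := by
      rw [hqdef]; exact Finset.sum_congr rfl fun A _ => by rw [if_pos rfl, mul_one]
    rw [this, hp1 j]
  -- the strong hash condition in terms of q
  have hH : ∀ j, ∑ v ∈ Finset.univ.filter
      (fun v => v ≠ uK j ∧ α j / c j < q j v), q j v ≤ β j :=
    fun j => Hhash j (uK j)
  -- sets of "dangerous" values per coordinate
  set S : ∀ j, Finset (Fin n → U j) := fun j =>
    insert (uK j) (Finset.univ.filter fun v => v ≠ uK j ∧ α j / c j < q j v) with hSdef
  have hSK : ∀ j, uK j ∈ S j := fun j => Finset.mem_insert_self _ _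
  have hSsum : ∀ j, ∑ v ∈ S j, q j v ≤ 1 + β j := by
    intro j
    rw [hSdef, Finset.sum_insert (by simp)]
    exact add_le_add (le_of_eq (hqK j)) (hH j)
  have hSsum0 : ∀ j, 0 ≤ ∑ v ∈ S j, q j v := fun j =>
    Finset.sum_nonneg fun v _ => hq0 j v
  set G' : Finset (∀ j, Fin n → U j) := G.filter (fun u' => u' ≠ uK) with hG'def
  -- Step 1: union bound + independence
  have step1 : ∑ A : ∀ j, (Fin n → U j) → B j,
      (∏ j, p j (A j)) *
        (if ∃ u' ∈ G, u' ≠ uK ∧ ∀ j, A j (u' j) = A j (uK j) then 1 else 0)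
      ≤ ∑ u' ∈ G', ∏ j, q j (u' j) := by
    have key1 : ∀ A : ∀ j, (Fin n → U j) → B j,
        (∏ j, p j (A j)) *
          (if ∃ u' ∈ G, u' ≠ uK ∧ ∀ j, A j (u' j) = A j (uK j) then 1 else 0)
        ≤ ∑ u' ∈ G', ∏ j, (p j (A j) * if A j (uK j) = A j (u' j) then (1:ℝ) else 0) := by
      intro A
      have hnn : ∀ u' ∈ G', (0:ℝ) ≤ ∏ j, (p j (A j) * if A j (uK j) = A j (u' j) then (1:ℝ) else 0) :=
        fun u' _ => Finset.prod_nonneg fun j _ =>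
          mul_nonneg (hp j (A j)) (by split <;> norm_num)
      split_ifs with h
      · obtain ⟨u₀, hu₀G, hne, hcol⟩ := h
        have hmem : u₀ ∈ G' := Finset.mem_filter.2 ⟨hu₀G, hne⟩
        calc (∏ j, p j (A j)) * 1
            = ∏ j, (p j (A j) * if A j (uK j) = A j (u₀ j) then (1:ℝ) else 0) := by
              rw [mul_one]
              exact Finset.prod_congr rfl fun j _ => by rw [if_pos (hcol j).symm, mul_one]
          _ ≤ _ := Finset.single_le_sum hnn hmem
      · rw [mul_zero]; exact Finset.sum_nonneg hnn
    calc ∑ A : ∀ j, (Fin n → U j) → B j, (∏ j, p j (A j)) *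
          (if ∃ u' ∈ G, u' ≠ uK ∧ ∀ j, A j (u' j) = A j (uK j) then 1 else 0)
        ≤ ∑ A : ∀ j, (Fin n → U j) → B j, ∑ u' ∈ G',
            ∏ j, (p j (A j) * if A j (uK j) = A j (u' j) then (1:ℝ) else 0) :=
          Finset.sum_le_sum fun A _ => key1 A
      _ = ∑ u' ∈ G', ∑ A : ∀ j, (Fin n → U j) → B j,
            ∏ j, (p j (A j) * if A j (uK j) = A j (u' j) then (1:ℝ) else 0) :=
          Finset.sum_comm
      _ = ∑ u' ∈ G', ∏ j, q j (u' j) := by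
          refine Finset.sum_congr rfl fun u' _ => ?_
          have := (Finset.prod_univ_sum
            (fun j : K => (Finset.univ : Finset ((Fin n → U j) → B j)))
            (fun j a => p j a * if a (uK j) = a (u' j) then (1:ℝ) else 0)).symm
          rw [Fintype.piFinset_univ] at this
          exact this
  -- which coordinates of u' are "light"
  set Jfun : (∀ j, Fin n → U j) → Finset K :=
    fun u' => Finset.univ.filter fun j => u' j ≠ uK j ∧ q j (u' j) ≤ α j / c j with hJfundef
  have hmemS : ∀ (u' : ∀ j, Fin n → U j) (j : K), j ∉ Jfun u' → u' j ∈ S j := by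
    intro u' j hj
    rw [hJfundef] at hj
    simp only [Finset.mem_filter, Finset.mem_univ, true_and, not_and, not_le] at hj
    by_cases h : u' j = uK j
    · rw [hSdef, h]; exact Finset.mem_insert_self _ _
    · rw [hSdef]
      exact Finset.mem_insert_of_mem (Finset.mem_filter.2 ⟨Finset.mem_univ _, h, hj h⟩)
  -- Step 2: fiberwise decomposition over the light set
  have step2 : ∑ u' ∈ G', ∏ j, q j (u' j)
      = ∑ J : Finset K, ∑ u' ∈ G'.filter (fun u' => Jfun u' = J), ∏ j, q j (u' j) :=
    (Finset.sum_fiberwise G' Jfun _).symm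
  -- empty light set
  have hempty : ∑ u' ∈ G'.filter (fun u' => Jfun u' = ∅), ∏ j, q j (u' j)
      ≤ (∏ j : K, (1 + β j)) - 1 := by
    have hsub : G'.filter (fun u' => Jfun u' = ∅) ⊆ (Fintype.piFinset S).erase uK := by
      intro u' hu'
      obtain ⟨hu'G', hJ⟩ := Finset.mem_filter.1 hu'
      obtain ⟨-, hne⟩ := Finset.mem_filter.1 hu'G'
      refine Finset.mem_erase.2 ⟨hne, Fintype.mem_piFinset.2 fun j => ?_⟩
      exact hmemS u' j (by rw [hJ]; exact Finset.notMem_empty j)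
    calc ∑ u' ∈ G'.filter (fun u' => Jfun u' = ∅), ∏ j, q j (u' j)
        ≤ ∑ x ∈ (Fintype.piFinset S).erase uK, ∏ j, q j (x j) :=
          Finset.sum_le_sum_of_subset_of_nonneg hsub
            (fun x _ _ => Finset.prod_nonneg fun j _ => hq0 j (x j))
      _ = (∑ x ∈ Fintype.piFinset S, ∏ j, q j (x j)) - ∏ j, q j (uK j) :=
          Finset.sum_erase_eq_sub (Fintype.mem_piFinset.2 hSK)
      _ = (∏ j, ∑ v ∈ S j, q j v) - 1 := by
          rw [← Finset.prod_univ_sum, Finset.prod_eq_one fun j _ => hqK j]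
      _ ≤ (∏ j : K, (1 + β j)) - 1 :=
          sub_le_sub_right (Finset.prod_le_prod (fun j _ => hSsum0 j) (fun j _ => hSsum j)) 1
  -- nonempty light set
  have hnon : ∀ J : Finset K,
      ∑ u' ∈ G'.filter (fun u' => Jfun u' = J), ∏ j, q j (u' j)
      ≤ ((if J = Finset.univ then (G.card : ℝ)
            else ((G.sup fun w => (G.filter fun g => ∀ j ∉ J, g j = w j).card : ℕ) : ℝ)) *
          (∏ j ∈ J, α j) * (∏ j ∈ Jᶜ, (1 + β j))) /
          (∏ j ∈ J, (Fintype.card (B j) : ℝ)) := by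
    intro J
    set N : ℝ := if J = Finset.univ then (G.card : ℝ)
      else ((G.sup fun w => (G.filter fun g => ∀ j ∉ J, g j = w j).card : ℕ) : ℝ) with hNdef
    have hN0 : 0 ≤ N := by rw [hNdef]; split <;> positivity
    have hfib : ∀ u₀ ∈ G, ((G.filter fun g => ∀ j ∉ J, g j = u₀ j).card : ℝ) ≤ N := by
      intro u₀ hu₀
      rw [hNdef]
      split_ifs with h
      · exact_mod_cast Finset.card_le_card (Finset.filter_subset _ _)
      · exact_mod_cast Finset.le_sup
          (f := fun w => (G.filter fun g => ∀ j ∉ J, g j = w j).card) hu₀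
    set cl : Finset (∀ j, Fin n → U j) := G'.filter (fun u' => Jfun u' = J) with hcldef
    -- pointwise bound using light coordinates
    have hpoint : ∀ u' ∈ cl, ∏ j, q j (u' j)
        ≤ (∏ j ∈ J, (α j / c j)) * ∏ j ∈ Jᶜ, q j (u' j) := by
      intro u' hu'
      have hJu : Jfun u' = J := (Finset.mem_filter.1 hu').2
      rw [← Finset.prod_mul_prod_compl J (fun j => q j (u' j))]
      refine mul_le_mul_of_nonneg_right (Finset.prod_le_prod (fun j _ => hq0 j (u' j)) ?_)
        (Finset.prod_nonneg fun j _ => hq0 j (u' j))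
      intro j hj
      have : j ∈ Jfun u' := by rw [hJu]; exact hj
      rw [hJfundef] at this
      exact (Finset.mem_filter.1 this).2.2
    -- bound on the sum of complement-products over the class
    have hcompl : ∑ u' ∈ cl, ∏ j ∈ Jᶜ, q j (u' j) ≤ N * ∏ j ∈ Jᶜ, (1 + β j) := by
      set r : (∀ j, Fin n → U j) → (∀ j, Fin n → U j) :=
        fun u' j => if j ∈ J then uK j else u' j with hrdef
      set t : ∀ j, Finset (Fin n → U j) :=
        fun j => if j ∈ J then {uK j} else S j with htdef
      have hmaps : ∀ u' ∈ cl, r u' ∈ Fintype.piFinset t := by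
        intro u' hu'
        have hJu : Jfun u' = J := (Finset.mem_filter.1 hu').2
        refine Fintype.mem_piFinset.2 fun j => ?_
        rw [hrdef, htdef]
        by_cases hj : j ∈ J
        · simp [hj]
        · simp only [if_neg hj]
          exact hmemS u' j (by rw [hJu]; exact hj)
      have hfiber : ∀ w ∈ Fintype.piFinset t,
          ∑ u' ∈ cl.filter (fun u' => r u' = w), ∏ j ∈ Jᶜ, q j (u' j)
          ≤ N * ∏ j ∈ Jᶜ, q j (w j) := by
        intro w hw
        have hqwnn : (0:ℝ) ≤ ∏ j ∈ Jᶜ, q j (w j) :=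
          Finset.prod_nonneg fun j _ => hq0 j (w j)
        have heq : ∀ u' ∈ cl.filter (fun u' => r u' = w),
            ∏ j ∈ Jᶜ, q j (u' j) = ∏ j ∈ Jᶜ, q j (w j) := by
          intro u' hu'
          have hrw : r u' = w := (Finset.mem_filter.1 hu').2
          refine Finset.prod_congr rfl fun j hj => ?_
          have hjJ : j ∉ J := Finset.mem_compl.1 hj
          have : u' j = w j := by
            rw [← hrw, hrdef]; simp [hjJ]
          rw [this]
        rw [Finset.sum_congr rfl heq, Finset.sum_const, nsmul_eq_mul]
        rcases Finset.eq_empty_or_nonempty (cl.filter (fun u' => r u' = w)) with he | ⟨u₀, hu₀⟩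
        · rw [he]; simpa using mul_nonneg hN0 hqwnn
        · refine mul_le_mul_of_nonneg_right ?_ hqwnn
          have hu₀G : u₀ ∈ G := by
            have := (Finset.mem_filter.1 (Finset.mem_filter.1 hu₀).1).1
            exact (Finset.mem_filter.1 this).1
          refine le_trans ?_ (hfib u₀ hu₀G)
          have hsub : cl.filter (fun u' => r u' = w)
              ⊆ G.filter fun g => ∀ j ∉ J, g j = u₀ j := by
            intro u' hu'
            obtain ⟨hu'cl, hru'⟩ := Finset.mem_filter.1 hu'
            obtain ⟨hu'G', -⟩ := Finset.mem_filter.1 hu'cl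
            refine Finset.mem_filter.2 ⟨(Finset.mem_filter.1 hu'G').1, fun j hj => ?_⟩
            have h1 : u' j = w j := by
              rw [← hru', hrdef]; simp [hj]
            have h2 : u₀ j = w j := by
              rw [← (Finset.mem_filter.1 hu₀).2, hrdef]; simp [hj]
            rw [h1, h2]
          exact_mod_cast Nat.cast_le.2 (Finset.card_le_card hsub)
      have prod_compl_eq : ∀ (h : K → ℝ), (∀ j ∈ J, h j = 1) → ∏ j, h j = ∏ j ∈ Jᶜ, h j := by
        intro h hh
        rw [← Finset.prod_mul_prod_compl J h, Finset.prod_eq_one hh, one_mul]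
      have hW : ∑ w ∈ Fintype.piFinset t, ∏ j ∈ Jᶜ, q j (w j)
          = ∏ j ∈ Jᶜ, ∑ v ∈ S j, q j v := by
        have h1 : ∀ w : ∀ j, Fin n → U j, ∏ j ∈ Jᶜ, q j (w j)
            = ∏ j, (if j ∈ J then (1:ℝ) else q j (w j)) := by
          intro w
          rw [prod_compl_eq _ (fun j hj => if_pos hj)]
          exact Finset.prod_congr rfl fun j hj => (if_neg (Finset.mem_compl.1 hj)).symm
        simp only [h1]
        rw [← Finset.prod_univ_sum t (fun j v => if j ∈ J then (1:ℝ) else q j v)]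
        rw [prod_compl_eq _ (fun j hj => by
          rw [htdef]; simp only [if_pos hj, Finset.sum_singleton])]
        refine Finset.prod_congr rfl fun j hj => ?_
        have hjJ : j ∉ J := Finset.mem_compl.1 hj
        rw [htdef]
        simp only [if_neg hjJ]
      calc ∑ u' ∈ cl, ∏ j ∈ Jᶜ, q j (u' j)
          = ∑ w ∈ Fintype.piFinset t, ∑ u' ∈ cl.filter (fun u' => r u' = w),
              ∏ j ∈ Jᶜ, q j (u' j) := (Finset.sum_fiberwise_of_maps_to hmaps _).symm
        _ ≤ ∑ w ∈ Fintype.piFinset t, N * ∏ j ∈ Jᶜ, q j (w j) :=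
            Finset.sum_le_sum hfiber
        _ = N * ∑ w ∈ Fintype.piFinset t, ∏ j ∈ Jᶜ, q j (w j) := by
            rw [Finset.mul_sum]
        _ = N * ∏ j ∈ Jᶜ, ∑ v ∈ S j, q j v := by rw [hW]
        _ ≤ N * ∏ j ∈ Jᶜ, (1 + β j) :=
            mul_le_mul_of_nonneg_left
              (Finset.prod_le_prod (fun j _ => hSsum0 j) (fun j _ => hSsum j)) hN0
    have halg : (∏ j ∈ J, (α j / c j)) * (N * ∏ j ∈ Jᶜ, (1 + β j))
        = (N * (∏ j ∈ J, α j) * (∏ j ∈ Jᶜ, (1 + β j))) / (∏ j ∈ J, c j) := by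
      rw [Finset.prod_div_distrib]; ring
    calc ∑ u' ∈ cl, ∏ j, q j (u' j)
        ≤ ∑ u' ∈ cl, (∏ j ∈ J, (α j / c j)) * ∏ j ∈ Jᶜ, q j (u' j) :=
          Finset.sum_le_sum hpoint
      _ = (∏ j ∈ J, (α j / c j)) * ∑ u' ∈ cl, ∏ j ∈ Jᶜ, q j (u' j) := by
          rw [Finset.mul_sum]
      _ ≤ (∏ j ∈ J, (α j / c j)) * (N * ∏ j ∈ Jᶜ, (1 + β j)) :=
          mul_le_mul_of_nonneg_left hcompl
            (Finset.prod_nonneg fun j _ => div_nonneg (hα j) (by positivity))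
      _ = (N * (∏ j ∈ J, α j) * (∏ j ∈ Jᶜ, (1 + β j))) / (∏ j ∈ J, c j) := halg
  -- assemble
  have hfilter : Finset.univ.filter (fun J : Finset K => ¬ J.Nonempty) = {(∅ : Finset K)} := by
    ext J
    simp [Finset.not_nonempty_iff_eq_empty]
  calc ∑ A : ∀ j, (Fin n → U j) → B j,
        (∏ j, p j (A j)) *
          (if ∃ u' ∈ G, u' ≠ uK ∧ ∀ j, A j (u' j) = A j (uK j) then 1 else 0)
      ≤ ∑ u' ∈ G', ∏ j, q j (u' j) := step1
    _ = ∑ J : Finset K, ∑ u' ∈ G'.filter (fun u' => Jfun u' = J), ∏ j, q j (u' j) := step2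
    _ = (∑ J ∈ Finset.univ.filter (fun J : Finset K => J.Nonempty),
            ∑ u' ∈ G'.filter (fun u' => Jfun u' = J), ∏ j, q j (u' j))
        + ∑ J ∈ Finset.univ.filter (fun J : Finset K => ¬ J.Nonempty),
            ∑ u' ∈ G'.filter (fun u' => Jfun u' = J), ∏ j, q j (u' j) :=
        (Finset.sum_filter_add_sum_filter_not _ _ _).symm
    _ ≤ (∑ J ∈ Finset.univ.powerset.filter (fun J : Finset K => J.Nonempty),
          ((if J = Finset.univ then (G.card : ℝ)
              else ((G.sup fun w => (G.filter fun g => ∀ j ∉ J, g j = w j).card : ℕ) : ℝ)) *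
            (∏ j ∈ J, α j) * (∏ j ∈ Jᶜ, (1 + β j))) /
            (∏ j ∈ J, (Fintype.card (B j) : ℝ)))
        + ((∏ j : K, (1 + β j)) - 1) := by
        rw [Finset.powerset_univ, hfilter, Finset.sum_singleton]
        exact add_le_add (Finset.sum_le_sum fun J _ => hnon J) hempty
end

section
/- Let μ_{UX_KY} be a joint distribution of the form μ(u, x_K, y) = μ_{Y|X_K}(y|x_K)·[∏_{j∈K} μ_{X_j|U}(x_j|u)]·μ_U(u), where K is a finite index set. Suppose rates R_K = (R_j)_{j∈K} and positive reals (ε_j)_{j∈K}, ε satisfy ∑_{j∈J}[R_j + ε_j] < I(X_J; Y | U, X_{J^c}) − ε for every nonempty J ⊆ K, and define r_j := H(X_j|U) − R_j − ε_j for each j ∈ K. Then r_j > 0 for all j, r_j + R_j = H(X_j|U) − ε_j, and for every nonempty J ⊆ K, ∑_{j∈J} r_j > H(X_J | U, X_{J^c}, Y) + ε. -/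
open Finset

/-- `−t·log₂ t`. -/
noncomputable def nml (t : ℝ) : ℝ := -(t * Real.logb 2 t)

lemma nml_mul (a b : ℝ) : nml (a * b) = a * nml b + b * nml a := by
  rcases eq_or_ne a 0 with rfl | ha
  · simp [nml]
  rcases eq_or_ne b 0 with rfl | hb
  · simp [nml]
  simp only [nml, Real.logb_mul ha hb]
  ring

lemma nml_prod {ι : Type*} [DecidableEq ι] (s : Finset ι) (g : ι → ℝ) :
    nml (∏ i ∈ s, g i) = ∑ i ∈ s, (∏ j ∈ s.erase i, g j) * nml (g i) := by
  induction s using Finset.induction with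
  | empty => simp [nml]
  | @insert a s ha ih =>
    rw [Finset.prod_insert ha, nml_mul, Finset.sum_insert ha, ih, Finset.erase_insert ha,
      Finset.mul_sum]
    have : ∀ i ∈ s, (∏ j ∈ (insert a s).erase i, g j) * nml (g i)
        = g a * ((∏ j ∈ s.erase i, g j) * nml (g i)) := by
      intro i hi
      have hia : a ≠ i := by rintro rfl; exact ha hi
      rw [Finset.erase_insert_of_ne hia,
        Finset.prod_insert (fun h => ha (Finset.mem_of_mem_erase h))]
      ring
    rw [Finset.sum_congr rfl this]
    ring

/-- Subadditivity of `nml` on nonnegative reals. -/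
lemma nml_sum_le {ι : Type*} (s : Finset ι) (f : ι → ℝ) (hf : ∀ i ∈ s, 0 ≤ f i) :
    nml (∑ i ∈ s, f i) ≤ ∑ i ∈ s, nml (f i) := by
  set S := ∑ i ∈ s, f i with hS
  have hS0 : 0 ≤ S := Finset.sum_nonneg hf
  rcases hS0.eq_or_lt with h0 | hpos
  · have hall : ∀ i ∈ s, f i = 0 := by
      intro i hi
      exact (Finset.sum_eq_zero_iff_of_nonneg hf).mp h0.symm i hi
    have h1 : ∑ i ∈ s, nml (f i) = 0 := Finset.sum_eq_zero (by intro i hi; simp [hall i hi, nml])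
    rw [← h0, h1]
    simp [nml]
  · have : nml S = ∑ i ∈ s, f i * (-Real.logb 2 S) := by
      rw [nml, ← Finset.sum_mul, ← hS]; ring
    rw [this]
    apply Finset.sum_le_sum
    intro i hi
    rcases (hf i hi).eq_or_lt with h0 | hpos'
    · simp [← h0, nml]
    · have hle : f i ≤ S := Finset.single_le_sum hf hi
      have := Real.logb_le_logb_of_le (one_lt_two) hpos' hle
      have h2 : -Real.logb 2 S ≤ -Real.logb 2 (f i) := by linarith
      calc f i * (-Real.logb 2 S) ≤ f i * (-Real.logb 2 (f i)) := by
            exact mul_le_mul_of_nonneg_left h2 (le_of_lt hpos')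
        _ = nml (f i) := by rw [nml]; ring

/-- Entropy of a product distribution scaled by `c`. -/
lemma sum_nml_prod {ι : Type*} [Fintype ι] [DecidableEq ι] {A : ι → Type*}
    [∀ i, Fintype (A i)] (f : ∀ i, A i → ℝ) (hf1 : ∀ i, ∑ a, f i a = 1) (c : ℝ) :
    ∑ x : ∀ i, A i, nml (c * ∏ i, f i (x i)) = nml c + c * ∑ i, ∑ a, nml (f i a) := by
  have hxsum : ∑ x : ∀ i, A i, ∏ i, f i (x i) = 1 := by
    rw [← Fintype.prod_sum]
    simp [hf1]
  have step1 : ∑ x : ∀ i, A i, nml (c * ∏ i, f i (x i))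
      = c * (∑ x : ∀ i, A i, nml (∏ i, f i (x i)))
        + (∑ x : ∀ i, A i, ∏ i, f i (x i)) * nml c := by
    rw [Finset.mul_sum, Finset.sum_mul, ← Finset.sum_add_distrib]
    exact Finset.sum_congr rfl (fun x _ => by rw [nml_mul])
  have step2 : ∑ x : ∀ i, A i, nml (∏ i, f i (x i)) = ∑ i, ∑ a, nml (f i a) := by
    have hpt : ∀ x : ∀ i, A i, nml (∏ i, f i (x i))
        = ∑ i, ∏ j, (if j = i then nml (f j (x j)) else f j (x j)) := by
      intro x
      rw [nml_prod]
      apply Finset.sum_congr rfl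
      intro i _
      rw [← Finset.mul_prod_erase Finset.univ
        (fun j => if j = i then nml (f j (x j)) else f j (x j)) (Finset.mem_univ i)]
      simp only [if_pos rfl]
      rw [mul_comm]
      congr 1
      apply Finset.prod_congr rfl
      intro j hj
      simp [Finset.ne_of_mem_erase hj]
    rw [Finset.sum_congr rfl (fun x _ => hpt x), Finset.sum_comm]
    apply Finset.sum_congr rfl
    intro i _
    have hps := (Fintype.prod_sum (fun j (a : A j) => if j = i then nml (f j a) else f j a)).symm
    rw [hps]
    rw [← Finset.mul_prod_erase Finset.univ
      (fun j => ∑ a, if j = i then nml (f j a) else f j a) (Finset.mem_univ i)]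
    have h1 : ∏ j ∈ Finset.univ.erase i, (∑ a, if j = i then nml (f j a) else f j a) = 1 := by
      apply Finset.prod_eq_one
      intro j hj
      simp [Finset.ne_of_mem_erase hj, hf1 j]
    simp only [if_pos rfl]
    rw [h1, mul_one]
    simp
  rw [step1, step2, hxsum]
  ring

section

variable {K : Type*} [Fintype K] [DecidableEq K]
  {Xj : K → Type*} [∀ j, Fintype (Xj j)] [∀ j, DecidableEq (Xj j)]
  {Uu Y : Type*} [Fintype Uu] [Fintype Y]

/-- `H(U, X_K, Y)`. -/
noncomputable def entFull (μ : Uu → (∀ j, Xj j) → Y → ℝ) : ℝ :=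
  ∑ u, ∑ x, ∑ y, nml (μ u x y)

/-- `H(U, X_K)`. -/
noncomputable def entUXK (μ : Uu → (∀ j, Xj j) → Y → ℝ) : ℝ :=
  ∑ u, ∑ x, nml (∑ y, μ u x y)

/-- `H(U)`. -/
noncomputable def entU (μ : Uu → (∀ j, Xj j) → Y → ℝ) : ℝ :=
  ∑ u, nml (∑ x, ∑ y, μ u x y)

/-- `H(U, X_j)`. -/
noncomputable def entUXj (μ : Uu → (∀ j, Xj j) → Y → ℝ) (j : K) : ℝ :=
  ∑ u, ∑ a : Xj j,
    nml (∑ x : ∀ i, Xj i, ∑ y, if x j = a then μ u x y else 0)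

/-- combine coordinates inside `J` and outside `J` into a full tuple. -/
def mergeJ (J : Finset K) (z : ∀ i : {i // i ∈ J}, Xj i)
    (w : ∀ i : {i // i ∈ Jᶜ}, Xj i) : ∀ i, Xj i :=
  fun i => if h : i ∈ J then z ⟨i, h⟩ else w ⟨i, Finset.mem_compl.mpr h⟩

/-- `H(U, X_{J^c}, Y)`. -/
noncomputable def entUXJcY (μ : Uu → (∀ j, Xj j) → Y → ℝ) (J : Finset K) : ℝ :=
  ∑ u, ∑ w : ∀ i : {i // i ∈ Jᶜ}, Xj i, ∑ y,
    nml (∑ z : ∀ i : {i // i ∈ J}, Xj i, μ u (mergeJ J z w) y)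

/-- `H(U, X_{J^c})`. -/
noncomputable def entUXJc (μ : Uu → (∀ j, Xj j) → Y → ℝ) (J : Finset K) : ℝ :=
  ∑ u, ∑ w : ∀ i : {i // i ∈ Jᶜ}, Xj i,
    nml (∑ z : ∀ i : {i // i ∈ J}, Xj i, ∑ y, μ u (mergeJ J z w) y)

/-- `H(X_J | U, X_{J^c}, Y)`. -/
noncomputable def condHJ (μ : Uu → (∀ j, Xj j) → Y → ℝ) (J : Finset K) : ℝ :=
  entFull μ - entUXJcY μ J

/-- `I(X_J ; Y | U, X_{J^c})`. -/
noncomputable def miJ (μ : Uu → (∀ j, Xj j) → Y → ℝ) (J : Finset K) : ℝ :=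
  (entUXK μ - entUXJc μ J) - (entFull μ - entUXJcY μ J)

/-- `H(X_j | U)`. -/
noncomputable def condHXjU (μ : Uu → (∀ j, Xj j) → Y → ℝ) (j : K) : ℝ :=
  entUXj μ j - entU μ

/-- the merging map as an equivalence. -/
def mergeEquiv (J : Finset K) :
    ((∀ i : {i // i ∈ J}, Xj i) × (∀ i : {i // i ∈ Jᶜ}, Xj i)) ≃ (∀ i, Xj i) where
  toFun zw := mergeJ J zw.1 zw.2
  invFun x := (fun i => x i.1, fun i => x i.1)
  left_inv := by
    rintro ⟨z, w⟩
    refine Prod.ext ?_ ?_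
    · funext i
      simp [mergeJ, i.2]
    · funext i
      have : (i : K) ∉ J := Finset.mem_compl.mp i.2
      simp [mergeJ, this]
  right_inv := by
    intro x
    funext i
    by_cases h : i ∈ J <;> simp [mergeJ, h]

lemma sum_merge (J : Finset K) (F : (∀ i, Xj i) → ℝ) :
    ∑ x, F x = ∑ w : ∀ i : {i // i ∈ Jᶜ}, Xj i, ∑ z : ∀ i : {i // i ∈ J}, Xj i,
      F (mergeJ J z w) := by
  rw [← Equiv.sum_comp (mergeEquiv (Xj := Xj) J) F, Fintype.sum_prod_type, Finset.sum_comm]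
  rfl

/-- the syndrome rates `r_j := H(X_j|U) − R_j − ε_j` are positive, satisfy
`r_j + R_j = H(X_j|U) − ε_j`, and lie in the conditional Slepian–Wolf region:
`∑_{j∈J} r_j > H(X_J|U,X_{J^c},Y) + ε` for every nonempty `J ⊆ K`. -/
theorem stmt19 (μ : Uu → (∀ j, Xj j) → Y → ℝ)
    (w : (∀ j, Xj j) → Y → ℝ) (q : ∀ j, Uu → Xj j → ℝ) (p : Uu → ℝ)
    (hw0 : ∀ x y, 0 ≤ w x y) (hw1 : ∀ x, ∑ y, w x y = 1)
    (hq0 : ∀ j u a, 0 ≤ q j u a) (hq1 : ∀ j u, ∑ a, q j u a = 1)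
    (hp0 : ∀ u, 0 ≤ p u) (hp1 : ∑ u, p u = 1)
    (hfac : ∀ u x y, μ u x y = w x y * (∏ j, q j u (x j)) * p u)
    (R ε : K → ℝ) (ε' : ℝ) (hε : ∀ j, 0 < ε j) (hε' : 0 < ε')
    (hrate : ∀ J : Finset K, J.Nonempty → ∑ j ∈ J, (R j + ε j) < miJ μ J - ε')
    (r : K → ℝ) (hr : ∀ j, r j = condHXjU μ j - R j - ε j) :
    (∀ j, 0 < r j) ∧
    (∀ j, r j + R j = condHXjU μ j - ε j) ∧
    (∀ J : Finset K, J.Nonempty → condHJ μ J + ε' < ∑ j ∈ J, r j) := by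
  -- nonnegativity of μ
  have hμ0 : ∀ u x y, 0 ≤ μ u x y := by
    intro u x y
    rw [hfac]
    exact mul_nonneg (mul_nonneg (hw0 x y) (Finset.prod_nonneg fun j _ => hq0 j u (x j))) (hp0 u)
  -- marginal over y
  have hmarg : ∀ u x, ∑ y, μ u x y = p u * ∏ j, q j u (x j) := by
    intro u x
    simp only [hfac, ← Finset.sum_mul]
    rw [hw1]
    ring
  -- the x-marginal of a product is 1
  have hxq : ∀ u, ∑ x : ∀ j, Xj j, ∏ j, q j u (x j) = 1 := by
    intro u
    rw [← Fintype.prod_sum]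
    simp [hq1]
  -- H(U)
  have hentU : entU μ = ∑ u, nml (p u) := by
    unfold entU
    apply Finset.sum_congr rfl
    intro u _
    congr 1
    rw [Finset.sum_congr rfl (fun x _ => hmarg u x), ← Finset.mul_sum, hxq, mul_one]
  -- H(U, X_K)
  have hentUXK : entUXK μ = ∑ u, (nml (p u) + p u * ∑ j, ∑ a, nml (q j u a)) := by
    unfold entUXK
    apply Finset.sum_congr rfl
    intro u _
    rw [Finset.sum_congr rfl (fun x _ => by rw [hmarg u x])]
    exact sum_nml_prod (fun j a => q j u a) (fun j => hq1 j u) (p u)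
  -- H(U, X_j)
  have hentUXj : ∀ j, entUXj μ j = ∑ u, (nml (p u) + p u * ∑ a, nml (q j u a)) := by
    intro j
    unfold entUXj
    apply Finset.sum_congr rfl
    intro u _
    have key : ∀ a : Xj j,
        (∑ x : ∀ i, Xj i, ∑ y, if x j = a then μ u x y else 0) = p u * q j u a := by
      intro a
      have h1 : ∀ x : ∀ i, Xj i, (∑ y, if x j = a then μ u x y else 0)
          = if x j = a then p u * ∏ i, q i u (x i) else 0 := by
        intro x
        by_cases h : x j = a
        · simp only [h, if_true]; exact hmarg u x
        · simp [h]
      rw [Finset.sum_congr rfl (fun x _ => h1 x)]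
      -- rewrite the indicator as a product via Function.update
      set g : ∀ i, Xj i → ℝ :=
        Function.update (fun i (b : Xj i) => q i u b) j (fun b => if b = a then q j u b else 0)
        with hg
      have h2 : ∀ x : ∀ i, Xj i,
          (if x j = a then p u * ∏ i, q i u (x i) else 0) = p u * ∏ i, g i (x i) := by
        intro x
        by_cases h : x j = a
        · simp only [h, if_true]
          congr 1
          apply Finset.prod_congr rfl
          intro i _
          by_cases hi : i = j
          · subst hi
            rw [hg]
            simp [h]
          · rw [hg, Function.update_of_ne hi]
        · simp only [h, if_false]
          have : g j (x j) = 0 := by rw [hg]; simp [h]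
          rw [Finset.prod_eq_zero (Finset.mem_univ j) this]
          ring
      rw [Finset.sum_congr rfl (fun x _ => h2 x), ← Finset.mul_sum]
      congr 1
      rw [← Fintype.prod_sum]
      rw [← Finset.mul_prod_erase Finset.univ _ (Finset.mem_univ j)]
      have h3 : ∑ b, g j b = q j u a := by
        rw [hg]
        simp [Function.update_self]
      have h4 : ∏ i ∈ Finset.univ.erase j, (∑ b, g i b) = 1 := by
        apply Finset.prod_eq_one
        intro i hi
        rw [hg, Function.update_of_ne (Finset.ne_of_mem_erase hi)]
        exact hq1 i u
      rw [h3, h4, mul_one]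
    rw [Finset.sum_congr rfl (fun (a : Xj j) (_ : a ∈ Finset.univ) => by rw [key a])]
    have := sum_nml_prod (A := fun _ : Unit => Xj j) (fun _ a => q j u a) (fun _ => hq1 j u) (p u)
    calc ∑ a, nml (p u * q j u a)
        = ∑ a, (p u * nml (q j u a) + q j u a * nml (p u)) :=
          Finset.sum_congr rfl (fun a _ => nml_mul _ _)
      _ = nml (p u) + p u * ∑ a, nml (q j u a) := by
          rw [Finset.sum_add_distrib, ← Finset.mul_sum, ← Finset.sum_mul, hq1 j u]
          ring
  -- inner marginal for J-splitting
  have hmergeprod : ∀ (J : Finset K) u (z : ∀ i : {i // i ∈ J}, Xj i)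
      (w' : ∀ i : {i // i ∈ Jᶜ}, Xj i),
      (∏ i, q i u (mergeJ J z w' i))
        = (∏ i : {i // i ∈ J}, q i.1 u (z i)) * ∏ i : {i // i ∈ Jᶜ}, q i.1 u (w' i) := by
    intro J u z w'
    rw [← Finset.prod_mul_prod_compl J (fun i => q i u (mergeJ J z w' i))]
    congr 1
    · rw [← Finset.prod_coe_sort J (fun i => q i u (mergeJ J z w' i))]
      apply Finset.prod_congr rfl
      intro i _
      simp [mergeJ, i.2]
    · rw [← Finset.prod_coe_sort Jᶜ (fun i => q i u (mergeJ J z w' i))]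
      apply Finset.prod_congr rfl
      intro i _
      have : (i : K) ∉ J := Finset.mem_compl.mp i.2
      simp [mergeJ, this]
  -- z-marginal
  have hzmarg : ∀ (J : Finset K) u (w' : ∀ i : {i // i ∈ Jᶜ}, Xj i),
      (∑ z : ∀ i : {i // i ∈ J}, Xj i, ∑ y, μ u (mergeJ J z w') y)
        = p u * ∏ i : {i // i ∈ Jᶜ}, q i.1 u (w' i) := by
    intro J u w'
    have : ∀ z : ∀ i : {i // i ∈ J}, Xj i, (∑ y, μ u (mergeJ J z w') y)
        = (p u * ∏ i : {i // i ∈ Jᶜ}, q i.1 u (w' i)) * ∏ i : {i // i ∈ J}, q i.1 u (z i) := by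
      intro z
      rw [hmarg, hmergeprod J u z w']
      ring
    rw [Finset.sum_congr rfl (fun z _ => this z), ← Finset.mul_sum]
    have h1 : ∑ z : ∀ i : {i // i ∈ J}, Xj i, ∏ i : {i // i ∈ J}, q i.1 u (z i) = 1 := by
      rw [← Fintype.prod_sum]
      simp [hq1]
    rw [h1, mul_one]
  -- H(U, X_{J^c})
  have hentUXJc : ∀ J : Finset K, entUXJc μ J
      = ∑ u, (nml (p u) + p u * ∑ i : {i // i ∈ Jᶜ}, ∑ a, nml (q i.1 u a)) := by
    intro J
    unfold entUXJc
    apply Finset.sum_congr rfl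
    intro u _
    rw [Finset.sum_congr rfl (fun w' _ => by rw [hzmarg J u w'])]
    exact sum_nml_prod (fun (i : {i // i ∈ Jᶜ}) a => q i.1 u a) (fun i => hq1 i.1 u) (p u)
  -- conditional entropy nonneg: entUXJcY ≤ entFull
  have hle : ∀ J : Finset K, entUXJcY μ J ≤ entFull μ := by
    intro J
    unfold entFull entUXJcY
    apply Finset.sum_le_sum
    intro u _
    rw [sum_merge J (fun x => ∑ y, nml (μ u x y))]
    apply Finset.sum_le_sum
    intro w' _
    rw [Finset.sum_comm]
    apply Finset.sum_le_sum
    intro y _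
    exact nml_sum_le _ _ (fun z _ => hμ0 u (mergeJ J z w') y)
  -- the key identity
  have hA : ∀ J : Finset K, entUXK μ - entUXJc μ J = ∑ j ∈ J, condHXjU μ j := by
    intro J
    have hXjU : ∀ j, condHXjU μ j = ∑ u, p u * ∑ a, nml (q j u a) := by
      intro j
      unfold condHXjU
      rw [hentUXj j, hentU, Finset.sum_add_distrib]
      ring
    rw [hentUXK, hentUXJc J]
    have hrhs : ∑ j ∈ J, condHXjU μ j = ∑ u, ∑ j ∈ J, p u * ∑ a, nml (q j u a) := by
      rw [Finset.sum_congr rfl (fun j (_ : j ∈ J) => hXjU j), Finset.sum_comm]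
    rw [hrhs, ← Finset.sum_sub_distrib]
    apply Finset.sum_congr rfl
    intro u _
    rw [Finset.sum_coe_sort Jᶜ (fun j => ∑ a, nml (q j u a)),
      ← Finset.sum_add_sum_compl J (fun j => ∑ a, nml (q j u a))]
    have hms : ∑ j ∈ J, p u * (∑ a, nml (q j u a))
        = p u * ∑ j ∈ J, ∑ a, nml (q j u a) := (Finset.mul_sum J (fun j => ∑ a, nml (q j u a)) (p u)).symm
    rw [hms]
    ring
  -- conditional entropy is nonnegative
  have hnn : ∀ J : Finset K, 0 ≤ condHJ μ J := fun J => sub_nonneg.mpr (hle J)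
  -- the Slepian–Wolf claim
  have claim3 : ∀ J : Finset K, J.Nonempty → condHJ μ J + ε' < ∑ j ∈ J, r j := by
    intro J hJ
    have h1 := hrate J hJ
    have h2 : miJ μ J = (∑ j ∈ J, condHXjU μ j) - condHJ μ J := by
      simp only [miJ, condHJ]
      linarith [hA J]
    have h3 : ∑ j ∈ J, r j = (∑ j ∈ J, condHXjU μ j) - ∑ j ∈ J, (R j + ε j) := by
      rw [Finset.sum_congr rfl (fun j (_ : j ∈ J) => hr j), ← Finset.sum_sub_distrib]
      apply Finset.sum_congr rfl
      intro j _
      ring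
    rw [h2] at h1
    linarith
  refine ⟨?_, ?_, claim3⟩
  · intro j
    have h := claim3 {j} (Finset.singleton_nonempty j)
    rw [Finset.sum_singleton] at h
    linarith [hnn {j}]
  · intro j
    rw [hr j]
    ring

end
end
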